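/- If the consecution X ⊩ A is provable in the bunched natural deduction system R, then X and A share a variable: some atom p occurs as a subexpression of both X and A. -/

import Mathlib

/-- Formulas of the language L, generated from atoms by ¬, ∧, ∨, →, ∘. -/
inductive Fml : Type
  | atom : ℕ → Fml
  | neg : Fml → Fml
  | conj : Fml → Fml → Fml
  | disj : Fml → Fml → Fml
  | imp : Fml → Fml → Fml
  | fus : Fml → Fml → Fml

/-- Atom p occurs in the formula. -/
def occursF (p : ℕ) : Fml → Prop
  | .atom q => q = p
  | .neg A => occursF p A
  | .conj A B => occursF p A ∨ occursF p B
  | .disj A B => occursF p A ∨ occursF p B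
  | .imp A B => occursF p A ∨ occursF p B
  | .fus A B => occursF p A ∨ occursF p B

/-- Bunches: formulas are the atomic bunches, closed under comma and semicolon. -/
inductive Bunch : Type
  | fml : Fml → Bunch
  | comma : Bunch → Bunch → Bunch
  | semi : Bunch → Bunch → Bunch

/-- Atom p occurs in the bunch. -/
def occursB (p : ℕ) : Bunch → Prop
  | .fml A => occursF p A
  | .comma X Y => occursB p X ∨ occursB p Y
  | .semi X Y => occursB p X ∨ occursB p Y

/-- Bunch contexts: a bunch with one distinguished hole at a bunch position. -/
inductive Ctx : Type
  | hole : Ctx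
  | commaL : Ctx → Bunch → Ctx
  | commaR : Bunch → Ctx → Ctx
  | semiL : Ctx → Bunch → Ctx
  | semiR : Bunch → Ctx → Ctx

/-- Filling the hole of a bunch context with a bunch. -/
def Ctx.fill : Ctx → Bunch → Bunch
  | .hole, X => X
  | .commaL c Y, X => .comma (c.fill X) Y
  | .commaR Y c, X => .comma Y (c.fill X)
  | .semiL c Y, X => .semi (c.fill X) Y
  | .semiR Y c, X => .semi Y (c.fill X)

/-- The natural deduction system R: as B but with (¬I) replaced by (¬I₂) and the
semicolon structural rules B, C, W added; `NDR X A` means X ⊩ A is provable in R. -/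
inductive NDR : Bunch → Fml → Prop
  | id (A) : NDR (.fml A) A
  | impI {X A B} : NDR (.semi X (.fml A)) B → NDR X (.imp A B)
  | impE {X Y A B} : NDR X (.imp A B) → NDR Y A → NDR (.semi X Y) B
  | orI1 {X A} (B) : NDR X A → NDR X (.disj A B)
  | orI2 {X B} (A) : NDR X B → NDR X (.disj A B)
  | orE {X A B C} {Y : Ctx} : NDR X (.disj A B) → NDR (Y.fill (.fml A)) C →
      NDR (Y.fill (.fml B)) C → NDR (Y.fill X) C
  | andI {X Y A B} : NDR X A → NDR Y B → NDR (.comma X Y) (.conj A B)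
  | andE {X A B C} {Y : Ctx} : NDR X (.conj A B) →
      NDR (Y.fill (.comma (.fml A) (.fml B))) C → NDR (Y.fill X) C
  | fusI {X Y A B} : NDR X A → NDR Y B → NDR (.semi X Y) (.fus A B)
  | fusE {X A B C} {Y : Ctx} : NDR X (.fus A B) →
      NDR (Y.fill (.semi (.fml A) (.fml B))) C → NDR (Y.fill X) C
  | negI2 {X Y A B} : NDR (.semi X (.fml A)) (.neg B) → NDR Y B →
      NDR (.semi X Y) (.neg A)
  | negE {X A} : NDR X (.neg (.neg A)) → NDR X A
  | cut {X A B} {Y : Ctx} : NDR X A → NDR (Y.fill (.fml A)) B → NDR (Y.fill X) B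
  | eB {W : Ctx} {X Y Z A} : NDR (W.fill (.comma X (.comma Y Z))) A →
      NDR (W.fill (.comma (.comma X Y) Z)) A
  | eC {W : Ctx} {X Y A} : NDR (W.fill (.comma X Y)) A → NDR (W.fill (.comma Y X)) A
  | eW {W : Ctx} {X A} : NDR (W.fill (.comma X X)) A → NDR (W.fill X) A
  | eK {W : Ctx} {X Y A} : NDR (W.fill X) A → NDR (W.fill (.comma X Y)) A
  | sB {W : Ctx} {X Y Z A} : NDR (W.fill (.semi X (.semi Y Z))) A →
      NDR (W.fill (.semi (.semi X Y) Z)) A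
  | sC {W : Ctx} {X Y A} : NDR (W.fill (.semi X Y)) A → NDR (W.fill (.semi Y X)) A
  | sW {W : Ctx} {X A} : NDR (W.fill (.semi X X)) A → NDR (W.fill X) A

/-! ### Auxiliary: a 4-element De Morgan monoid used as a countermodel algebra -/

inductive M | bo | aa | bb | tp deriving DecidableEq

instance : Fintype M := ⟨{M.bo, M.aa, M.bb, M.tp}, by intro x; cases x <;> simp⟩

def Mle : M → M → Bool
  | .bo, _ => true
  | _, .tp => true
  | .aa, .aa => true
  | .bb, .bb => true
  | _, _ => false

def Mmeet : M → M → M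
  | .bo, _ => .bo
  | _, .bo => .bo
  | .tp, x => x
  | x, .tp => x
  | .aa, .aa => .aa
  | .bb, .bb => .bb
  | .aa, .bb => .bo
  | .bb, .aa => .bo

def Mjoin : M → M → M
  | .tp, _ => .tp
  | _, .tp => .tp
  | .bo, x => x
  | x, .bo => x
  | .aa, .aa => .aa
  | .bb, .bb => .bb
  | .aa, .bb => .tp
  | .bb, .aa => .tp

def Mneg : M → M
  | .bo => .tp
  | .tp => .bo
  | .aa => .aa
  | .bb => .bb

def Mfus : M → M → M
  | .bo, _ => .bo
  | _, .bo => .bo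
  | .tp, _ => .tp
  | _, .tp => .tp
  | .aa, .aa => .aa
  | .bb, .bb => .bb
  | .aa, .bb => .tp
  | .bb, .aa => .tp

def Mimp (x y : M) : M := Mneg (Mfus x (Mneg y))

/-- Value of a formula under a valuation. -/
def fval (v : ℕ → M) : Fml → M
  | .atom n => v n
  | .neg A => Mneg (fval v A)
  | .conj A B => Mmeet (fval v A) (fval v B)
  | .disj A B => Mjoin (fval v A) (fval v B)
  | .imp A B => Mimp (fval v A) (fval v B)
  | .fus A B => Mfus (fval v A) (fval v B)

/-- Value of a bunch: comma is meet, semicolon is fusion. -/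
def bval (v : ℕ → M) : Bunch → M
  | .fml A => fval v A
  | .comma X Y => Mmeet (bval v X) (bval v Y)
  | .semi X Y => Mfus (bval v X) (bval v Y)

/-- Value of a context as a function of the value of the hole. -/
def cval (v : ℕ → M) : Ctx → M → M
  | .hole, m => m
  | .commaL c Y, m => Mmeet (cval v c m) (bval v Y)
  | .commaR Y c, m => Mmeet (bval v Y) (cval v c m)
  | .semiL c Y, m => Mfus (cval v c m) (bval v Y)
  | .semiR Y c, m => Mfus (bval v Y) (cval v c m)

lemma bval_fill (v : ℕ → M) (Y : Ctx) (X : Bunch) :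
    bval v (Y.fill X) = cval v Y (bval v X) := by
  induction Y <;> simp [Ctx.fill, bval, cval, *]

lemma Mle_trans : ∀ x y z : M, Mle x y → Mle y z → Mle x z := by decide

lemma cval_mono (v : ℕ → M) (Y : Ctx) {m m' : M} (h : Mle m m') :
    Mle (cval v Y m) (cval v Y m') := by
  have hm : ∀ x y x' y' : M, Mle x x' → Mle y y' → Mle (Mmeet x y) (Mmeet x' y') := by decide
  have hf : ∀ x y x' y' : M, Mle x x' → Mle y y' → Mle (Mfus x y) (Mfus x' y') := by decide
  have hr : ∀ x : M, Mle x x := by decide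
  induction Y <;> simp only [cval] <;>
    first
      | exact h
      | exact hm _ _ _ _ (by assumption) (hr _)
      | exact hm _ _ _ _ (hr _) (by assumption)
      | exact hf _ _ _ _ (by assumption) (hr _)
      | exact hf _ _ _ _ (hr _) (by assumption)

lemma cval_join (v : ℕ → M) (Y : Ctx) (m m' : M) :
    cval v Y (Mjoin m m') = Mjoin (cval v Y m) (cval v Y m') := by
  have d1 : ∀ x y z : M, Mmeet (Mjoin x y) z = Mjoin (Mmeet x z) (Mmeet y z) := by decide
  have d2 : ∀ x y z : M, Mmeet z (Mjoin x y) = Mjoin (Mmeet z x) (Mmeet z y) := by decide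
  have d3 : ∀ x y z : M, Mfus (Mjoin x y) z = Mjoin (Mfus x z) (Mfus y z) := by decide
  have d4 : ∀ x y z : M, Mfus z (Mjoin x y) = Mjoin (Mfus z x) (Mfus z y) := by decide
  induction Y <;> simp only [cval, *] <;> first | rfl | apply d1 | apply d2 | apply d3 | apply d4

/-- Soundness of R with respect to the algebra M. -/
lemma ndr_sound {X : Bunch} {A : Fml} (h : NDR X A) (v : ℕ → M) :
    Mle (bval v X) (fval v A) := by
  induction h with
  | id A => exact (by decide : ∀ x : M, Mle x x) _
  | impI h ih => exact (by decide : ∀ x a b : M, Mle (Mfus x a) b → Mle x (Mimp a b)) _ _ _ ih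
  | impE h1 h2 ih1 ih2 =>
      exact (by decide : ∀ x y a b : M, Mle x (Mimp a b) → Mle y a → Mle (Mfus x y) b)
        _ _ _ _ ih1 ih2
  | orI1 B h ih => exact (by decide : ∀ x a b : M, Mle x a → Mle x (Mjoin a b)) _ _ _ ih
  | orI2 A h ih => exact (by decide : ∀ x a b : M, Mle x b → Mle x (Mjoin a b)) _ _ _ ih
  | orE h1 h2 h3 ih1 ih2 ih3 =>
      rw [bval_fill] at *
      refine Mle_trans _ _ _ (cval_mono v _ ih1) ?_
      simp only [fval, cval_join]
      exact (by decide : ∀ x y z : M, Mle x z → Mle y z → Mle (Mjoin x y) z) _ _ _ ih2 ih3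
  | andI h1 h2 ih1 ih2 =>
      exact (by decide : ∀ x y a b : M, Mle x a → Mle y b → Mle (Mmeet x y) (Mmeet a b))
        _ _ _ _ ih1 ih2
  | andE h1 h2 ih1 ih2 =>
      rw [bval_fill] at *
      exact Mle_trans _ _ _ (cval_mono v _ ih1) ih2
  | fusI h1 h2 ih1 ih2 =>
      exact (by decide : ∀ x y a b : M, Mle x a → Mle y b → Mle (Mfus x y) (Mfus a b))
        _ _ _ _ ih1 ih2
  | fusE h1 h2 ih1 ih2 =>
      rw [bval_fill] at *
      exact Mle_trans _ _ _ (cval_mono v _ ih1) ih2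
  | negI2 h1 h2 ih1 ih2 =>
      exact (by decide : ∀ x a b y : M, Mle (Mfus x a) (Mneg b) → Mle y b →
        Mle (Mfus x y) (Mneg a)) _ _ _ _ ih1 ih2
  | negE h ih => exact (by decide : ∀ x a : M, Mle x (Mneg (Mneg a)) → Mle x a) _ _ ih
  | cut h1 h2 ih1 ih2 =>
      rw [bval_fill] at *
      exact Mle_trans _ _ _ (cval_mono v _ ih1) ih2
  | eB h ih =>
      rw [bval_fill] at *
      refine Mle_trans _ _ _ (cval_mono v _ ?_) ih
      exact (by decide : ∀ x y z : M, Mle (Mmeet (Mmeet x y) z) (Mmeet x (Mmeet y z))) _ _ _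
  | eC h ih =>
      rw [bval_fill] at *
      refine Mle_trans _ _ _ (cval_mono v _ ?_) ih
      exact (by decide : ∀ x y : M, Mle (Mmeet y x) (Mmeet x y)) _ _
  | eW h ih =>
      rw [bval_fill] at *
      refine Mle_trans _ _ _ (cval_mono v _ ?_) ih
      exact (by decide : ∀ x : M, Mle x (Mmeet x x)) _
  | eK h ih =>
      rw [bval_fill] at *
      refine Mle_trans _ _ _ (cval_mono v _ ?_) ih
      exact (by decide : ∀ x y : M, Mle (Mmeet x y) x) _ _
  | sB h ih =>
      rw [bval_fill] at *
      refine Mle_trans _ _ _ (cval_mono v _ ?_) ih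
      exact (by decide : ∀ x y z : M, Mle (Mfus (Mfus x y) z) (Mfus x (Mfus y z))) _ _ _
  | sC h ih =>
      rw [bval_fill] at *
      refine Mle_trans _ _ _ (cval_mono v _ ?_) ih
      exact (by decide : ∀ x y : M, Mle (Mfus y x) (Mfus x y)) _ _
  | sW h ih =>
      rw [bval_fill] at *
      refine Mle_trans _ _ _ (cval_mono v _ ?_) ih
      exact (by decide : ∀ x : M, Mle x (Mfus x x)) _

instance decOccF (p : ℕ) : ∀ A : Fml, Decidable (occursF p A)
  | .atom q => by unfold occursF; infer_instance
  | .neg A => by unfold occursF; exact decOccF p A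
  | .conj A B => by unfold occursF; exact @instDecidableOr _ _ (decOccF p A) (decOccF p B)
  | .disj A B => by unfold occursF; exact @instDecidableOr _ _ (decOccF p A) (decOccF p B)
  | .imp A B => by unfold occursF; exact @instDecidableOr _ _ (decOccF p A) (decOccF p B)
  | .fus A B => by unfold occursF; exact @instDecidableOr _ _ (decOccF p A) (decOccF p B)

/-- A formula all of whose atoms get value `m` (where `m` is idempotent) evaluates to `m`. -/
lemma fval_const (v : ℕ → M) (m : M)
    (hneg : Mneg m = m) (hmeet : Mmeet m m = m) (hjoin : Mjoin m m = m)
    (himp : Mimp m m = m) (hfus : Mfus m m = m) :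
    ∀ B : Fml, (∀ q, occursF q B → v q = m) → fval v B = m := by
  intro B
  induction B with
  | atom n => intro h; exact h n rfl
  | neg A ih => intro h; simp [fval, ih h, hneg]
  | conj A B ihA ihB =>
      intro h
      simp [fval, ihA (fun q hq => h q (Or.inl hq)), ihB (fun q hq => h q (Or.inr hq)), hmeet]
  | disj A B ihA ihB =>
      intro h
      simp [fval, ihA (fun q hq => h q (Or.inl hq)), ihB (fun q hq => h q (Or.inr hq)), hjoin]
  | imp A B ihA ihB =>
      intro h
      simp [fval, ihA (fun q hq => h q (Or.inl hq)), ihB (fun q hq => h q (Or.inr hq)), himp]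
  | fus A B ihA ihB =>
      intro h
      simp [fval, ihA (fun q hq => h q (Or.inl hq)), ihB (fun q hq => h q (Or.inr hq)), hfus]

/-- If the consecution X ⊩ A is provable in the natural deduction system R, then X
and A share a variable. -/
theorem R_variable_sharing (X : Bunch) (A : Fml) (h : NDR X A) :
    ∃ p, occursB p X ∧ occursF p A := by
  by_contra hc
  push_neg at hc
  -- valuation: atoms of A ↦ aa, all other atoms ↦ bb
  set v : ℕ → M := fun p => if occursF p A then M.aa else M.bb with hv
  have hA : fval v A = M.aa := by
    refine fval_const v M.aa (by decide) (by decide) (by decide) (by decide) (by decide) A ?_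
    intro q hq
    simp [hv, hq]
  have hX : bval v X = M.bb := by
    have hb : ∀ X' : Bunch, (∀ q, occursB q X' → ¬ occursF q A) → bval v X' = M.bb := by
      intro X'
      induction X' with
      | fml B =>
          intro hB
          refine fval_const v M.bb (by decide) (by decide) (by decide) (by decide) (by decide) B ?_
          intro q hq
          simp [hv, hB q hq]
      | comma Y Z ihY ihZ =>
          intro hB
          have h1 := ihY (fun q hq => hB q (Or.inl hq))
          have h2 := ihZ (fun q hq => hB q (Or.inr hq))
          simp [bval, h1, h2]; rfl
      | semi Y Z ihY ihZ =>
          intro hB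
          have h1 := ihY (fun q hq => hB q (Or.inl hq))
          have h2 := ihZ (fun q hq => hB q (Or.inr hq))
          simp [bval, h1, h2]; rfl
    exact hb X hc
  have := ndr_sound h v
  rw [hA, hX] at this
  exact absurd this (by decide)
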